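/- arXiv:2208.13297 — 7 statements merged into one kernel-verified Lean document; each statement's English description precedes it below -/
import Mathlib

section
/- Every finite simple graph G admits a proper edge-coloring with at most Δ(G)^2 colors such that every color class is a semistrong matching and, moreover, for every edge e there is at most one edge at distance exactly 2 from e receiving the same color as e (i.e., the coloring is also a (0,1)-relaxed strong edge-coloring). -/
/-!
Weight two distinct edges `e, f` by `2` if they share a vertex and otherwise by the number of
edges of `G` meeting both. Around a fixed edge these weights sum to at most
`2 (2Δ - 2) + 2 (Δ - 1)² = 2Δ² - 2`, so whatever the colouring with `Δ²` colours, some colour has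
total weight (load) at most `1` at that edge. Take a colouring minimising the sum, over all edges,
of the load of their own colour: as the weights are symmetric, recolouring one edge changes this
potential by twice the change of its load, so in a minimiser every edge has load at most `1`.
Such a load forbids a same-coloured edge sharing a vertex (properness) and two different pairs
(connecting edge, same-coloured edge at distance two); the latter gives the (0,1)-condition and,
applied to the two endpoints of an edge, the semistrong condition.
-/

open SimpleGraph

variable {V : Type*}

/-- The set of endvertices of the edges in `M`. -/
def edgeVerts (M : Set (Sym2 V)) : Set V := {v | ∃ e ∈ M, v ∈ e}

/-- `M` is a matching of the simple graph `G`: a set of edges of `G`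
that are pairwise disjoint. -/
def IsMatchingSet (G : SimpleGraph V) (M : Set (Sym2 V)) : Prop :=
  M ⊆ G.edgeSet ∧ ∀ e ∈ M, ∀ f ∈ M, e ≠ f → ∀ v : V, v ∈ e → v ∉ f

/-- `M` is a semistrong matching of `G`: a matching such that every edge of `M`
has an endvertex of degree one in the subgraph of `G` induced by the
endvertices of the edges of `M`. -/
def IsSemistrongMatching (G : SimpleGraph V) (M : Set (Sym2 V)) : Prop :=
  IsMatchingSet G M ∧
    ∀ e ∈ M, ∃ u v : V, e = s(u, v) ∧ ∀ w ∈ edgeVerts M, G.Adj u w → w = v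

/-- `G` has a semistrong edge-coloring with (at most) `k` colors: a proper
edge-coloring in which every color class is a semistrong matching. -/
def HasSemistrongEdgeColoring (G : SimpleGraph V) (k : ℕ) : Prop :=
  ∃ c : Sym2 V → ℕ, (∀ e ∈ G.edgeSet, c e < k) ∧
    ∀ i : ℕ, IsSemistrongMatching G {e | e ∈ G.edgeSet ∧ c e = i}

/-- The semistrong chromatic index of `G`. -/
noncomputable def ssChromIdx (G : SimpleGraph V) : ℕ :=
  sInf {k | HasSemistrongEdgeColoring G k}

/-- The edges `e` and `f` of `G` are at distance exactly `2`: they are disjoint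
and some edge of `G` is adjacent to both. -/
def AtDistTwo (G : SimpleGraph V) (e f : Sym2 V) : Prop :=
  e ∈ G.edgeSet ∧ f ∈ G.edgeSet ∧ (∀ v : V, v ∈ e → v ∉ f) ∧
    ∃ g ∈ G.edgeSet, (∃ v : V, v ∈ g ∧ v ∈ e) ∧ (∃ w : V, w ∈ g ∧ w ∈ f)

open Finset

theorem Finset.sum_sum_eq_two_nsmul_add_of_symm {ι M : Type*} [DecidableEq ι] [AddCommMonoid M]
    {s : Finset ι} {F : ι → ι → M} (hF : ∀ a b, F a b = F b a) {e : ι} (he : e ∈ s)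
    (hee : F e e = 0) :
    ∑ a ∈ s, ∑ b ∈ s, F a b = 2 • ∑ b ∈ s, F e b + ∑ a ∈ s.erase e, ∑ b ∈ s.erase e, F a b := by
  have hrow (a : ι) : ∑ b ∈ s, F a b = F a e + ∑ b ∈ s.erase e, F a b :=
    (add_sum_erase s _ he).symm
  have hcol : ∑ a ∈ s.erase e, F a e = ∑ b ∈ s, F e b := by
    simp_rw [hF _ e]
    exact sum_erase _ hee
  rw [← add_sum_erase s _ he, sum_congr rfl fun a _ => hrow a, sum_add_distrib, hcol, two_nsmul,
    add_assoc]

namespace Sym2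

variable {α : Type*}

def Touches (e f : Sym2 α) : Prop := ∃ v, v ∈ e ∧ v ∈ f

instance [Fintype α] [DecidableEq α] : DecidableRel (Touches (α := α)) :=
  fun e f => inferInstanceAs (Decidable (∃ v, v ∈ e ∧ v ∈ f))

theorem Touches.symm {e f : Sym2 α} (h : e.Touches f) : f.Touches e :=
  let ⟨v, he, hf⟩ := h
  ⟨v, hf, he⟩

theorem touches_comm {e f : Sym2 α} : e.Touches f ↔ f.Touches e :=
  ⟨Touches.symm, Touches.symm⟩

theorem touches_self (e : Sym2 α) : e.Touches e := by
  induction e using Sym2.ind with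
  | h u v => exact ⟨u, mem_mk_left u v, mem_mk_left u v⟩

end Sym2

namespace SimpleGraph

variable [Fintype V] {G : SimpleGraph V} [DecidableRel G.Adj]

theorem one_le_maxDegree_of_mem_edgeSet {e : Sym2 V} (he : e ∈ G.edgeSet) :
    1 ≤ G.maxDegree := by
  induction e using Sym2.ind with
  | h u v => exact ((G.degree_pos_iff_exists_adj u).2 ⟨v, he⟩).trans_le (G.degree_le_maxDegree u)

variable [DecidableEq V] (G)

def linkCount (e f : Sym2 V) : ℕ := #{g ∈ G.edgeFinset | g.Touches e ∧ g.Touches f}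

def conflictWeight (e f : Sym2 V) : ℕ :=
  if e = f then 0 else if e.Touches f then 2 else G.linkCount e f

def colorLoad (c : Sym2 V → ℕ) (e : Sym2 V) (α : ℕ) : ℕ :=
  ∑ f ∈ G.edgeFinset with c f = α, G.conflictWeight e f

def conflictPotential (c : Sym2 V → ℕ) : ℕ :=
  ∑ e ∈ G.edgeFinset, G.colorLoad c e (c e)

def conflictLinks (c : Sym2 V → ℕ) (e : Sym2 V) : Finset (Sym2 V × Sym2 V) :=
  {p ∈ G.edgeFinset ×ˢ G.edgeFinset |
    c p.2 = c e ∧ ¬ e.Touches p.2 ∧ p.1.Touches e ∧ p.1.Touches p.2}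

variable {G}

theorem card_touching_add_two_le {e : Sym2 V} (he : e ∈ G.edgeSet) :
    #{f ∈ G.edgeFinset | f ≠ e ∧ e.Touches f} + 2 ≤ 2 * G.maxDegree := by
  induction e using Sym2.ind with
  | h u v =>
  have hu : s(u, v) ∈ G.incidenceFinset u :=
    (G.mem_incidenceFinset _ _).2 ⟨he, Sym2.mem_mk_left u v⟩
  have hv : s(u, v) ∈ G.incidenceFinset v :=
    (G.mem_incidenceFinset _ _).2 ⟨he, Sym2.mem_mk_right u v⟩
  have hsub : {f ∈ G.edgeFinset | f ≠ s(u, v) ∧ s(u, v).Touches f}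
      ⊆ (G.incidenceFinset u ∪ G.incidenceFinset v).erase s(u, v) := by
    intro f hf
    simp only [mem_filter, mem_edgeFinset] at hf
    obtain ⟨hfE, hne, w, hw, hwf⟩ := hf
    rw [mem_erase, mem_union, G.mem_incidenceFinset, G.mem_incidenceFinset]
    rcases Sym2.mem_iff.1 hw with rfl | rfl
    · exact ⟨hne, .inl ⟨hfE, hwf⟩⟩
    · exact ⟨hne, .inr ⟨hfE, hwf⟩⟩
  have := card_le_card hsub
  have := card_erase_add_one (mem_union_left (G.incidenceFinset v) hu)
  have := card_union_add_card_inter (G.incidenceFinset u) (G.incidenceFinset v)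
  have : 0 < #(G.incidenceFinset u ∩ G.incidenceFinset v) := card_pos.2 ⟨_, mem_inter.2 ⟨hu, hv⟩⟩
  rw [card_incidenceFinset_eq_degree, card_incidenceFinset_eq_degree] at *
  have := G.degree_le_maxDegree u
  have := G.degree_le_maxDegree v
  omega

theorem card_far_touching_add_one_le {e g : Sym2 V} (hg : g ∈ G.edgeSet) (hge : g.Touches e) :
    #{f ∈ G.edgeFinset | ¬ e.Touches f ∧ g.Touches f} + 1 ≤ G.maxDegree := by
  obtain ⟨x, hxg, hxe⟩ := hge
  obtain ⟨y, rfl⟩ : ∃ y, s(x, y) = g := ⟨_, Sym2.other_spec hxg⟩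
  have hy : s(x, y) ∈ G.incidenceFinset y :=
    (G.mem_incidenceFinset _ _).2 ⟨hg, Sym2.mem_mk_right x y⟩
  have hsub : {f ∈ G.edgeFinset | ¬ e.Touches f ∧ s(x, y).Touches f}
      ⊆ (G.incidenceFinset y).erase s(x, y) := by
    intro f hf
    simp only [mem_filter, mem_edgeFinset] at hf
    obtain ⟨hfE, hef, w, hw, hwf⟩ := hf
    rcases Sym2.mem_iff.1 hw with rfl | rfl
    · exact absurd ⟨w, hxe, hwf⟩ hef
    · refine mem_erase.2 ⟨?_, (G.mem_incidenceFinset _ _).2 ⟨hfE, hwf⟩⟩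
      rintro rfl
      exact hef ⟨x, hxe, Sym2.mem_mk_left x w⟩
  have := card_le_card hsub
  have := card_erase_add_one hy
  rw [card_incidenceFinset_eq_degree] at this
  have := G.degree_le_maxDegree y
  omega

theorem sum_linkCount_le {e : Sym2 V} (he : e ∈ G.edgeSet) :
    ∑ f ∈ G.edgeFinset with ¬ e.Touches f, G.linkCount e f ≤ 2 * (G.maxDegree - 1) ^ 2 := by
  set D := {f ∈ G.edgeFinset | ¬ e.Touches f}
  have hg : ∀ g ∈ G.edgeFinset, #{f ∈ D | g.Touches e ∧ g.Touches f}
      ≤ if g ≠ e ∧ e.Touches g then G.maxDegree - 1 else 0 := by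
    intro g hg
    split_ifs with h
    · have := card_far_touching_add_one_le (mem_edgeFinset.1 hg) h.2.symm
      have : #{f ∈ D | g.Touches e ∧ g.Touches f}
          ≤ #{f ∈ G.edgeFinset | ¬ e.Touches f ∧ g.Touches f} := by
        refine card_le_card fun f hf => ?_
        simp only [D, mem_filter] at hf ⊢
        exact ⟨hf.1.1, hf.1.2, hf.2.2⟩
      omega
    · refine Nat.le_zero.2 (card_eq_zero.2 (filter_eq_empty_iff.2 ?_))
      rintro f hf ⟨hge, hgf⟩
      simp only [D, mem_filter] at hf
      by_cases hge' : g = e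
      · exact hf.2 (hge' ▸ hgf)
      · exact h ⟨hge', hge.symm⟩
  calc ∑ f ∈ D, G.linkCount e f
      = ∑ g ∈ G.edgeFinset, #{f ∈ D | g.Touches e ∧ g.Touches f} := by
        simp only [linkCount, card_filter]
        exact sum_comm
    _ ≤ ∑ g ∈ G.edgeFinset, if g ≠ e ∧ e.Touches g then G.maxDegree - 1 else 0 := sum_le_sum hg
    _ = #{g ∈ G.edgeFinset | g ≠ e ∧ e.Touches g} * (G.maxDegree - 1) := by
        rw [← sum_filter, sum_const, smul_eq_mul]
    _ ≤ 2 * (G.maxDegree - 1) ^ 2 := by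
        have := card_touching_add_two_le he
        rw [sq, ← mul_assoc]
        exact Nat.mul_le_mul_right _ (by omega)

theorem sum_conflictWeight_add_two_le {e : Sym2 V} (he : e ∈ G.edgeSet) :
    ∑ f ∈ G.edgeFinset, G.conflictWeight e f + 2 ≤ 2 * G.maxDegree ^ 2 := by
  have hw (f : Sym2 V) : G.conflictWeight e f
      ≤ (if f ≠ e ∧ e.Touches f then 2 else 0) + if ¬ e.Touches f then G.linkCount e f else 0 := by
    unfold conflictWeight
    split_ifs <;> simp_all
  have hsum : ∑ f ∈ G.edgeFinset, G.conflictWeight e f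
      ≤ #{f ∈ G.edgeFinset | f ≠ e ∧ e.Touches f} * 2
        + ∑ f ∈ G.edgeFinset with ¬ e.Touches f, G.linkCount e f := by
    refine (sum_le_sum fun f _ => hw f).trans_eq ?_
    rw [sum_add_distrib, ← sum_filter, ← sum_filter, sum_const, smul_eq_mul]
  have h₁ := card_touching_add_two_le he
  have h₂ := sum_linkCount_le he
  obtain ⟨d, hd⟩ : ∃ d, G.maxDegree = d + 1 :=
    ⟨_, (Nat.sub_add_cancel (one_le_maxDegree_of_mem_edgeSet he)).symm⟩
  rw [hd, Nat.add_sub_cancel] at h₂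
  rw [hd] at h₁ ⊢
  nlinarith

theorem exists_colorLoad_le_one {c : Sym2 V → ℕ} {k : ℕ} (hc : ∀ f ∈ G.edgeSet, c f < k)
    (hk : G.maxDegree ^ 2 ≤ k) {e : Sym2 V} (he : e ∈ G.edgeSet) :
    ∃ α < k, G.colorLoad c e α ≤ 1 := by
  by_contra! h
  have hfib : ∑ α ∈ range k, G.colorLoad c e α = ∑ f ∈ G.edgeFinset, G.conflictWeight e f :=
    sum_fiberwise_of_maps_to (fun f hf => mem_range.2 (hc f (mem_edgeFinset.1 hf))) _
  have hlow : #(range k) • 2 ≤ ∑ α ∈ range k, G.colorLoad c e α :=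
    card_nsmul_le_sum _ _ 2 fun α hα => h α (mem_range.1 hα)
  rw [card_range, smul_eq_mul] at hlow
  have := sum_conflictWeight_add_two_le he
  omega


theorem linkCount_comm (e f : Sym2 V) : G.linkCount e f = G.linkCount f e := by
  simp only [linkCount, and_comm]

theorem conflictWeight_comm (e f : Sym2 V) : G.conflictWeight e f = G.conflictWeight f e := by
  simp only [conflictWeight, linkCount_comm, eq_comm (a := e), Sym2.touches_comm (e := e)]

theorem conflictWeight_self (e : Sym2 V) : G.conflictWeight e e = 0 := if_pos rfl

theorem conflictPotential_eq (c : Sym2 V → ℕ) {e : Sym2 V} (he : e ∈ G.edgeSet) :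
    G.conflictPotential c = 2 * G.colorLoad c e (c e) +
      ∑ a ∈ G.edgeFinset.erase e, ∑ f ∈ G.edgeFinset.erase e,
        if c f = c a then G.conflictWeight a f else 0 := by
  have hsymm (a f : Sym2 V) : (if c f = c a then G.conflictWeight a f else 0) =
      if c a = c f then G.conflictWeight f a else 0 := by
    rw [conflictWeight_comm]
    exact if_congr eq_comm rfl rfl
  simpa only [conflictPotential, colorLoad, sum_filter, smul_eq_mul] using
    sum_sum_eq_two_nsmul_add_of_symm hsymm (mem_edgeFinset.2 he) (by simp [conflictWeight_self])

theorem conflictPotential_update (c : Sym2 V → ℕ) {e : Sym2 V} (he : e ∈ G.edgeSet) (α : ℕ) :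
    G.conflictPotential (Function.update c e α) + 2 * G.colorLoad c e (c e) =
      G.conflictPotential c + 2 * G.colorLoad c e α := by
  have hload : G.colorLoad (Function.update c e α) e α = G.colorLoad c e α := by
    simp only [colorLoad, sum_filter]
    refine sum_congr rfl fun f _ => ?_
    rcases eq_or_ne f e with rfl | hfe
    · simp [conflictWeight_self]
    · rw [Function.update_of_ne hfe]
  have hrest : ∀ a ∈ G.edgeFinset.erase e, ∀ f ∈ G.edgeFinset.erase e,
      (if Function.update c e α f = Function.update c e α a then G.conflictWeight a f else 0) =
        if c f = c a then G.conflictWeight a f else 0 := fun a ha f hf => by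
    rw [Function.update_of_ne (ne_of_mem_erase ha), Function.update_of_ne (ne_of_mem_erase hf)]
  rw [conflictPotential_eq _ he, conflictPotential_eq c he, Function.update_self, hload,
    sum_congr rfl fun a ha => sum_congr rfl (hrest a ha)]
  ring

theorem exists_coloring_colorLoad_le_one :
    ∃ c : Sym2 V → ℕ, (∀ e ∈ G.edgeSet, c e < G.maxDegree ^ 2) ∧
      ∀ e ∈ G.edgeSet, G.colorLoad c e (c e) ≤ 1 := by
  set S := {c : Sym2 V → ℕ | ∀ e ∈ G.edgeSet, c e < G.maxDegree ^ 2}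
  have hS : (0 : Sym2 V → ℕ) ∈ S := fun e he => pow_pos (one_le_maxDegree_of_mem_edgeSet he) 2
  set c := Function.argminOn G.conflictPotential S ⟨0, hS⟩
  have hc : c ∈ S := Function.argminOn_mem _ _ _
  refine ⟨c, hc, fun e he => ?_⟩
  obtain ⟨α, hαk, hα⟩ := exists_colorLoad_le_one hc le_rfl he
  have hupd : Function.update c e α ∈ S := by
    intro f hf
    rcases eq_or_ne f e with rfl | hfe
    · simpa using hαk
    · rw [Function.update_of_ne hfe]
      exact hc f hf
  have hmin : G.conflictPotential c ≤ G.conflictPotential (Function.update c e α) :=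
    Function.argminOn_le _ _ hupd
  have := conflictPotential_update c he α
  omega

theorem card_conflictLinks_le (c : Sym2 V → ℕ) (e : Sym2 V) :
    #(G.conflictLinks c e) ≤ G.colorLoad c e (c e) := by
  simp only [conflictLinks, colorLoad, card_filter, sum_product_right, sum_filter]
  refine sum_le_sum fun f _ => ?_
  by_cases h : c f = c e ∧ ¬ e.Touches f
  · have hef : e ≠ f := fun hef => h.2 (hef ▸ Sym2.touches_self e)
    simp only [h, not_false_eq_true, true_and, if_true, if_false, conflictWeight,
      if_neg hef, linkCount, ← card_filter, le_refl]
  · rw [sum_eq_zero fun g _ => if_neg fun hg => h ⟨hg.1, hg.2.1⟩]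
    exact Nat.zero_le _

theorem not_touches_of_colorLoad_le_one {c : Sym2 V → ℕ} {e f : Sym2 V}
    (hload : G.colorLoad c e (c e) ≤ 1) (hf : f ∈ G.edgeSet) (hfe : f ≠ e) (hcf : c f = c e) :
    ¬ e.Touches f := by
  intro h
  have : G.conflictWeight e f ≤ G.colorLoad c e (c e) :=
    single_le_sum (fun _ _ => Nat.zero_le _) (mem_filter.2 ⟨mem_edgeFinset.2 hf, hcf⟩)
  rw [conflictWeight, if_neg hfe.symm, if_pos h] at this
  omega


theorem mem_conflictLinks_of_adj {c : Sym2 V → ℕ} {u v w : V} {f : Sym2 V}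
    (hload : G.colorLoad c s(u, v) (c s(u, v)) ≤ 1) (hf : f ∈ G.edgeSet)
    (hcf : c f = c s(u, v)) (hwf : w ∈ f) (huw : G.Adj u w) (hwv : w ≠ v) :
    (s(u, w), f) ∈ G.conflictLinks c s(u, v) := by
  have hfe : f ≠ s(u, v) := by
    rintro rfl
    rcases Sym2.mem_iff.1 hwf with rfl | rfl
    exacts [huw.ne rfl, hwv rfl]
  simp only [conflictLinks, mem_filter, mem_product, mem_edgeFinset]
  exact ⟨⟨huw, hf⟩, hcf, not_touches_of_colorLoad_le_one hload hf hfe hcf,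
    ⟨u, Sym2.mem_mk_left u w, Sym2.mem_mk_left u v⟩, ⟨w, Sym2.mem_mk_right u w, hwf⟩⟩


theorem isSemistrongMatching_of_colorLoad_le_one {c : Sym2 V → ℕ}
    (hload : ∀ e ∈ G.edgeSet, G.colorLoad c e (c e) ≤ 1) (i : ℕ) :
    IsSemistrongMatching G {e | e ∈ G.edgeSet ∧ c e = i} := by
  refine ⟨⟨fun e he => he.1, ?_⟩, ?_⟩
  · rintro e ⟨he, rfl⟩ f ⟨hf, hcf⟩ hef v hve hvf
    exact not_touches_of_colorLoad_le_one (hload e he) hf (Ne.symm hef) hcf ⟨v, hve, hvf⟩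
  · rintro e ⟨he, rfl⟩
    induction e using Sym2.ind with
    | h x y =>
    by_contra! hbad
    have hlink (u v : V) (huv : s(x, y) = s(u, v)) :
        ∃ w ≠ v, ∃ f, (s(u, w), f) ∈ G.conflictLinks c s(x, y) := by
      obtain ⟨w, ⟨f, ⟨hf, hcf⟩, hwf⟩, huw, hwv⟩ := hbad u v huv
      rw [huv] at hcf ⊢
      exact ⟨w, hwv, f, mem_conflictLinks_of_adj (huv ▸ hload _ he) hf hcf hwf huw hwv⟩
    obtain ⟨w₁, hw₁, f₁, h₁⟩ := hlink x y rfl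
    obtain ⟨w₂, -, f₂, h₂⟩ := hlink y x Sym2.eq_swap
    have hne : (s(x, w₁), f₁) ≠ (s(y, w₂), f₂) := by
      intro h
      rcases Sym2.eq_iff.1 (Prod.ext_iff.1 h).1 with ⟨hxy, -⟩ | ⟨-, hwy⟩
      exacts [G.ne_of_adj he hxy, hw₁ hwy]
    have := (one_lt_card.2 ⟨_, h₁, _, h₂, hne⟩).trans_le (G.card_conflictLinks_le c s(x, y))
    have := hload _ he
    omega

theorem eq_of_atDistTwo_of_colorLoad_le_one {c : Sym2 V → ℕ} {e f₁ f₂ : Sym2 V}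
    (hload : G.colorLoad c e (c e) ≤ 1) (h₁ : AtDistTwo G e f₁) (hc₁ : c f₁ = c e)
    (h₂ : AtDistTwo G e f₂) (hc₂ : c f₂ = c e) : f₁ = f₂ := by
  have hlink (f : Sym2 V) (hf : AtDistTwo G e f) (hcf : c f = c e) :
      ∃ g, (g, f) ∈ G.conflictLinks c e := by
    obtain ⟨-, hf, hdisj, g, hg, ⟨v, hvg, hve⟩, ⟨w, hwg, hwf⟩⟩ := hf
    refine ⟨g, ?_⟩
    simp only [conflictLinks, mem_filter, mem_product, mem_edgeFinset]
    exact ⟨⟨hg, hf⟩, hcf, fun ⟨u, hue, huf⟩ => hdisj u hue huf, ⟨v, hvg, hve⟩, ⟨w, hwg, hwf⟩⟩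
  by_contra hne
  obtain ⟨g₁, hg₁⟩ := hlink f₁ h₁ hc₁
  obtain ⟨g₂, hg₂⟩ := hlink f₂ h₂ hc₂
  have := (one_lt_card.2 ⟨_, hg₁, _, hg₂, fun h => hne (Prod.ext_iff.1 h).2⟩).trans_le
    (G.card_conflictLinks_le c e)
  omega

end SimpleGraph

/-- Every finite simple graph `G` admits a proper edge-coloring with at most
`Δ(G)^2` colors such that every color class is a semistrong matching and,
moreover, for every edge `e` there is at most one edge at distance exactly `2`
from `e` receiving the same color as `e`. -/
theorem exists_semistrong_relaxed_coloring {V : Type*} [Fintype V] [DecidableEq V]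
    (G : SimpleGraph V) [DecidableRel G.Adj] :
    ∃ c : Sym2 V → ℕ,
      (∀ e ∈ G.edgeSet, c e < G.maxDegree ^ 2) ∧
      (∀ i : ℕ, IsSemistrongMatching G {e | e ∈ G.edgeSet ∧ c e = i}) ∧
      (∀ e ∈ G.edgeSet, ∀ f₁ f₂ : Sym2 V,
        AtDistTwo G e f₁ → c f₁ = c e → AtDistTwo G e f₂ → c f₂ = c e → f₁ = f₂) := by
  obtain ⟨c, hlt, hload⟩ := G.exists_coloring_colorLoad_le_one
  exact ⟨c, hlt, G.isSemistrongMatching_of_colorLoad_le_one hload,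
    fun e he _ _ => G.eq_of_atDistTwo_of_colorLoad_le_one (hload e he)⟩
end

section
/- In any semistrong edge-coloring of a finite simple graph G, the four edges of every 4-cycle of G receive four pairwise distinct colors. -/
open SimpleGraph

variable {V : Type*}

namespace IsMatchingSet

variable {G : SimpleGraph V} {M : Set (Sym2 V)}

theorem eq_of_mem_of_mem (hM : IsMatchingSet G M) {e f : Sym2 V} {v : V} (he : e ∈ M)
    (hf : f ∈ M) (hve : v ∈ e) (hvf : v ∈ f) : e = f :=
  by_contra fun hef => hM.2 e he f hf hef v hve hvf

theorem eq_of_mk_mem_of_mk_mem (hM : IsMatchingSet G M) {u v w : V} (huv : s(u, v) ∈ M)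
    (hvw : s(v, w) ∈ M) : u = w :=
  Sym2.congr_right.mp <| Sym2.eq_swap.trans <|
    hM.eq_of_mem_of_mem huv hvw (Sym2.mem_mk_right u v) (Sym2.mem_mk_left v w)

end IsMatchingSet

/-- The endvertex of `uv` of degree one among the endvertices of `M` has two neighbours on the
cycle `u v w x`, and both are endvertices of `M`, so they coincide. -/
theorem IsSemistrongMatching.eq_or_eq_of_adj_of_adj {G : SimpleGraph V} {M : Set (Sym2 V)}
    (hM : IsSemistrongMatching G M) {u v w x : V} (huv : s(u, v) ∈ M) (hwx : s(w, x) ∈ M)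
    (hvw : G.Adj v w) (hxu : G.Adj x u) : u = w ∨ v = x := by
  have mem_verts {y : V} {e : Sym2 V} (he : e ∈ M) (hy : y ∈ e) : y ∈ edgeVerts M := ⟨e, he, hy⟩
  obtain ⟨a, b, hab, hdeg⟩ := hM.2 _ huv
  rcases Sym2.eq_iff.mp hab with ⟨rfl, rfl⟩ | ⟨rfl, rfl⟩
  · exact .inr (hdeg x (mem_verts hwx (Sym2.mem_mk_right w x)) hxu.symm).symm
  · exact .inl (hdeg w (mem_verts hwx (Sym2.mem_mk_left w x)) hvw).symm

section Coloring

variable {G : SimpleGraph V} {c : Sym2 V → ℕ} {u v w x : V}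

theorem color_ne_of_adj_of_adj (hc : ∀ i : ℕ, IsMatchingSet G {e | e ∈ G.edgeSet ∧ c e = i})
    (huv : G.Adj u v) (hvw : G.Adj v w) (huw : u ≠ w) : c s(u, v) ≠ c s(v, w) :=
  fun h => huw <| (hc (c s(u, v))).eq_of_mk_mem_of_mk_mem ⟨huv, rfl⟩ ⟨hvw, h.symm⟩

theorem color_ne_of_four_cycle
    (hc : ∀ i : ℕ, IsSemistrongMatching G {e | e ∈ G.edgeSet ∧ c e = i})
    (huv : G.Adj u v) (hvw : G.Adj v w) (hwx : G.Adj w x) (hxu : G.Adj x u)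
    (huw : u ≠ w) (hvx : v ≠ x) : c s(u, v) ≠ c s(w, x) := fun h =>
  ((hc (c s(u, v))).eq_or_eq_of_adj_of_adj ⟨huv, rfl⟩ ⟨hwx, h.symm⟩ hvw hxu).elim huw hvx

end Coloring

theorem semistrong_coloring_rainbow_four_cycle_general {V : Type*}
    (G : SimpleGraph V) (c : Sym2 V → ℕ)
    (hc : ∀ i : ℕ, IsSemistrongMatching G {e | e ∈ G.edgeSet ∧ c e = i})
    (v₁ v₂ v₃ v₄ : V)
    (h12 : G.Adj v₁ v₂) (h23 : G.Adj v₂ v₃) (h34 : G.Adj v₃ v₄) (h41 : G.Adj v₄ v₁)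
    (hne : v₁ ≠ v₂ ∧ v₁ ≠ v₃ ∧ v₁ ≠ v₄ ∧ v₂ ≠ v₃ ∧ v₂ ≠ v₄ ∧ v₃ ≠ v₄) :
    c s(v₁, v₂) ≠ c s(v₂, v₃) ∧ c s(v₁, v₂) ≠ c s(v₃, v₄) ∧
    c s(v₁, v₂) ≠ c s(v₄, v₁) ∧ c s(v₂, v₃) ≠ c s(v₃, v₄) ∧
    c s(v₂, v₃) ≠ c s(v₄, v₁) ∧ c s(v₃, v₄) ≠ c s(v₄, v₁) := by
  obtain ⟨-, n13, -, -, n24, -⟩ := hne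
  have hm i := (hc i).1
  exact ⟨color_ne_of_adj_of_adj hm h12 h23 n13, color_ne_of_four_cycle hc h12 h23 h34 h41 n13 n24,
    (color_ne_of_adj_of_adj hm h41 h12 n24.symm).symm, color_ne_of_adj_of_adj hm h23 h34 n24,
    color_ne_of_four_cycle hc h23 h34 h41 h12 n24 n13.symm,
    color_ne_of_adj_of_adj hm h34 h41 n13.symm⟩

/-- In any semistrong edge-coloring of a finite simple graph `G`, the four
edges of every `4`-cycle of `G` receive four pairwise distinct colors. -/
theorem semistrong_coloring_rainbow_four_cycle {V : Type*} [Fintype V] [DecidableEq V]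
    (G : SimpleGraph V) (c : Sym2 V → ℕ)
    (hc : ∀ i : ℕ, IsSemistrongMatching G {e | e ∈ G.edgeSet ∧ c e = i})
    (v₁ v₂ v₃ v₄ : V)
    (h12 : G.Adj v₁ v₂) (h23 : G.Adj v₂ v₃) (h34 : G.Adj v₃ v₄) (h41 : G.Adj v₄ v₁)
    (hne : v₁ ≠ v₂ ∧ v₁ ≠ v₃ ∧ v₁ ≠ v₄ ∧ v₂ ≠ v₃ ∧ v₂ ≠ v₄ ∧ v₃ ≠ v₄) :
    c s(v₁, v₂) ≠ c s(v₂, v₃) ∧ c s(v₁, v₂) ≠ c s(v₃, v₄) ∧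
    c s(v₁, v₂) ≠ c s(v₄, v₁) ∧ c s(v₂, v₃) ≠ c s(v₃, v₄) ∧
    c s(v₂, v₃) ≠ c s(v₄, v₁) ∧ c s(v₃, v₄) ≠ c s(v₄, v₁) :=
  semistrong_coloring_rainbow_four_cycle_general G c hc v₁ v₂ v₃ v₄ h12 h23 h34 h41 hne
end

section
/- For all positive integers m and n, the semistrong chromatic index of the complete bipartite graph K_{m,n} equals m·n, i.e., χ''_ss(K_{m,n}) = m·n, and this coincides with its strong chromatic index. -/
open SimpleGraph

variable {V : Type*}

/-- `M` is a strong (induced) matching of `G`: a matching such that the subgraph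
of `G` induced by the endvertices of `M` contains no edges other than those of `M`. -/
def IsStrongMatching (G : SimpleGraph V) (M : Set (Sym2 V)) : Prop :=
  IsMatchingSet G M ∧
    ∀ u ∈ edgeVerts M, ∀ w ∈ edgeVerts M, G.Adj u w → s(u, w) ∈ M

/-- `G` has a strong edge-coloring with (at most) `k` colors. -/
def HasStrongEdgeColoring (G : SimpleGraph V) (k : ℕ) : Prop :=
  ∃ c : Sym2 V → ℕ, (∀ e ∈ G.edgeSet, c e < k) ∧
    ∀ i : ℕ, IsStrongMatching G {e | e ∈ G.edgeSet ∧ c e = i}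

/-- The strong chromatic index of `G`. -/
noncomputable def strongChromIdx (G : SimpleGraph V) : ℕ :=
  sInf {k | HasStrongEdgeColoring G k}

/-! In `K_{m,n}` every vertex is adjacent to an endvertex of every edge. So if `e = uv` and `f`
were two edges of a semistrong matching, with `u` the endvertex of degree one, then `u` would see
an endvertex of `f` among the matched vertices, forcing it to be `v` and `e`, `f` to meet.
Hence every colour class of a semistrong colouring is a single edge, and `χ''_ss ≥ |E| = mn`.
Conversely, giving all edges distinct colours is a strong colouring, and strong matchings are
semistrong (orient each edge arbitrarily), so `χ''_ss ≤ χ'_s ≤ mn`. -/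

variable {G : SimpleGraph V}

lemma IsStrongMatching.isSemistrongMatching {M : Set (Sym2 V)} (hM : IsStrongMatching G M) :
    IsSemistrongMatching G M := by
  obtain ⟨hmatch, hinduced⟩ := hM
  refine ⟨hmatch, fun e he => ?_⟩
  induction e using Sym2.ind with
  | _ u v =>
    refine ⟨u, v, rfl, fun w hw huw => ?_⟩
    have huM : u ∈ edgeVerts M := ⟨s(u, v), he, Sym2.mem_mk_left u v⟩
    have heq : s(u, w) = s(u, v) := by_contra fun hne =>
      hmatch.2 _ (hinduced u huM w hw huw) _ he hne u (Sym2.mem_mk_left u w) (Sym2.mem_mk_left u v)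
    simpa [Sym2.eq_iff, huw.ne'] using heq

lemma HasStrongEdgeColoring.hasSemistrongEdgeColoring {k : ℕ} (h : HasStrongEdgeColoring G k) :
    HasSemistrongEdgeColoring G k :=
  let ⟨c, hlt, hclass⟩ := h
  ⟨c, hlt, fun i => (hclass i).isSemistrongMatching⟩

lemma isStrongMatching_of_subsingleton {M : Set (Sym2 V)} (hsub : M ⊆ G.edgeSet)
    (hM : M.Subsingleton) : IsStrongMatching G M := by
  refine ⟨⟨hsub, fun e he f hf hef => absurd (hM he hf) hef⟩, ?_⟩
  rintro u ⟨e, he, hue⟩ w ⟨f, hf, hwf⟩ huw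
  obtain rfl := hM hf he
  rwa [← (Sym2.mem_and_mem_iff huw.ne).1 ⟨hue, hwf⟩]

lemma hasStrongEdgeColoring_ncard_edgeSet (hG : G.edgeSet.Finite) :
    HasStrongEdgeColoring G G.edgeSet.ncard := by
  have : Finite G.edgeSet := hG
  classical
  let c : Sym2 V → ℕ := fun e =>
    if he : e ∈ G.edgeSet then Finite.equivFin G.edgeSet ⟨e, he⟩ else 0
  have hc : ∀ e (he : e ∈ G.edgeSet), c e = Finite.equivFin G.edgeSet ⟨e, he⟩ :=
    fun e he => dif_pos he
  refine ⟨c, fun e he => ?_, fun i => isStrongMatching_of_subsingleton (fun e he => he.1) ?_⟩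
  · rw [hc e he, ← Nat.card_coe_set_eq]
    exact Fin.isLt _
  · rintro e ⟨he, rfl⟩ f ⟨hf, hcf⟩
    rw [hc e he, hc f hf, Fin.val_inj, Equiv.apply_eq_iff_eq] at hcf
    exact congrArg Subtype.val hcf.symm

lemma IsSemistrongMatching.subsingleton (hdom : ∀ u, ∀ f ∈ G.edgeSet, ∃ w ∈ f, G.Adj u w)
    {M : Set (Sym2 V)} (hM : IsSemistrongMatching G M) : M.Subsingleton := by
  intro e he f hf
  by_contra hef
  obtain ⟨u, v, rfl, hu⟩ := hM.2 e he
  obtain ⟨w, hwf, huw⟩ := hdom u f (hM.1.1 hf)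
  obtain rfl := hu w ⟨f, hf, hwf⟩ huw
  exact hM.1.2 _ he f hf hef w (Sym2.mem_mk_right u w) hwf

lemma HasSemistrongEdgeColoring.ncard_edgeSet_le
    (hdom : ∀ u, ∀ f ∈ G.edgeSet, ∃ w ∈ f, G.Adj u w) {k : ℕ}
    (h : HasSemistrongEdgeColoring G k) :
    G.edgeSet.ncard ≤ k := by
  obtain ⟨c, hlt, hclass⟩ := h
  calc G.edgeSet.ncard ≤ (Set.Iio k).ncard :=
        Set.ncard_le_ncard_of_injOn c hlt
          (fun e he f hf hcf => (hclass (c e)).subsingleton hdom ⟨he, rfl⟩ ⟨hf, hcf.symm⟩)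
          (Set.finite_Iio k)
    _ = k := Set.ncard_Iio_nat k

theorem ssChromIdx_eq_ncard_edgeSet (hdom : ∀ u, ∀ f ∈ G.edgeSet, ∃ w ∈ f, G.Adj u w)
    (hfin : G.edgeSet.Finite) :
    ssChromIdx G = G.edgeSet.ncard ∧ strongChromIdx G = G.edgeSet.ncard := by
  have hstrong := hasStrongEdgeColoring_ncard_edgeSet hfin
  have hss := hstrong.hasSemistrongEdgeColoring
  exact ⟨le_antisymm (Nat.sInf_le hss)
      (le_csInf ⟨_, hss⟩ fun _ hk => hk.ncard_edgeSet_le hdom),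
    le_antisymm (Nat.sInf_le hstrong)
      (le_csInf ⟨_, hstrong⟩ fun _ hk => hk.hasSemistrongEdgeColoring.ncard_edgeSet_le hdom)⟩

lemma completeBipartiteGraph_exists_adj_mem {α β : Type*} (u : α ⊕ β)
    (f : Sym2 (α ⊕ β)) (hf : f ∈ (completeBipartiteGraph α β).edgeSet) :
    ∃ w ∈ f, (completeBipartiteGraph α β).Adj u w := by
  induction f using Sym2.ind with
  | _ x y =>
    rcases u with u | u <;> rcases x with x | x <;> rcases y with y | y <;> simp_all

lemma ncard_edgeSet_completeBipartiteGraph (α β : Type*) [Finite α] [Finite β] :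
    (completeBipartiteGraph α β).edgeSet.ncard = Nat.card α * Nat.card β := by
  simp [Set.ncard_def, encard_edgeSet_completeBipartiteGraph, ENat.card_eq_coe_natCard]

theorem ssChromIdx_completeBipartiteGraph_general (m n : ℕ) :
    ssChromIdx (completeBipartiteGraph (Fin m) (Fin n)) = m * n ∧
    strongChromIdx (completeBipartiteGraph (Fin m) (Fin n)) = m * n := by
  simpa only [ncard_edgeSet_completeBipartiteGraph, Nat.card_fin] using
    ssChromIdx_eq_ncard_edgeSet (G := completeBipartiteGraph (Fin m) (Fin n))
      completeBipartiteGraph_exists_adj_mem (Set.toFinite _)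

/-- For all positive integers `m` and `n`, the semistrong chromatic index of the
complete bipartite graph `K_{m,n}` equals `m * n`, and this coincides with its
strong chromatic index. -/
theorem ssChromIdx_completeBipartiteGraph (m n : ℕ) (hm : 1 ≤ m) (hn : 1 ≤ n) :
    ssChromIdx (completeBipartiteGraph (Fin m) (Fin n)) = m * n ∧
    strongChromIdx (completeBipartiteGraph (Fin m) (Fin n)) = m * n :=
  ssChromIdx_completeBipartiteGraph_general m n
end

section
/- Every semistrong matching in the 5-prism (the Cartesian product of the 5-cycle C_5 with K_2) has size at most 2. -/
open SimpleGraph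

variable {V : Type*}

/-- The `5`-prism: the Cartesian (box) product of the cycle `C₅` with `K₂`. -/
def fivePrism : SimpleGraph (Fin 5 × Fin 2) :=
  SimpleGraph.cycleGraph 5 □ completeGraph (Fin 2)

/-! Orient every edge of a semistrong matching from an endvertex whose only neighbour among the
matched vertices is its partner. For two distinct edges of the matching, the tail of each such
dart is then adjacent to neither end of the other one. A finite search shows that the 5-prism has
no three darts that are pairwise separated in this sense. -/

namespace SimpleGraph

instance {α β : Type*} {G : SimpleGraph α} {H : SimpleGraph β} [DecidableEq α] [DecidableEq β]
    [DecidableRel G.Adj] [DecidableRel H.Adj] : DecidableRel (G □ H).Adj :=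
  fun _ _ => decidable_of_iff' _ boxProd_adj

variable {G : SimpleGraph V}

def Dart.IsPendantIn (d : G.Dart) (M : Set (Sym2 V)) : Prop :=
  ∀ w ∈ edgeVerts M, G.Adj d.fst w → w = d.snd

def Dart.Avoids (d d' : G.Dart) : Prop :=
  ¬G.Adj d.fst d'.fst ∧ ¬G.Adj d.fst d'.snd

def Dart.Separated (d d' : G.Dart) : Prop :=
  d.Avoids d' ∧ d'.Avoids d

instance [DecidableRel G.Adj] (d d' : G.Dart) : Decidable (d.Separated d') :=
  inferInstanceAs (Decidable ((_ ∧ _) ∧ (_ ∧ _)))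

end SimpleGraph

open SimpleGraph

variable {G : SimpleGraph V} {M : Set (Sym2 V)}

theorem IsSemistrongMatching.exists_dart_isPendantIn (hM : IsSemistrongMatching G M)
    {e : Sym2 V} (he : e ∈ M) : ∃ d : G.Dart, d.edge = e ∧ d.IsPendantIn M := by
  obtain ⟨u, v, rfl, hu⟩ := hM.2 _ he
  exact ⟨⟨(u, v), G.mem_edgeSet.mp (hM.1.1 he)⟩, rfl, hu⟩

theorem IsSemistrongMatching.avoids (hM : IsSemistrongMatching G M) {d d' : G.Dart}
    (hd : d.edge ∈ M) (hd' : d'.edge ∈ M) (hne : d.edge ≠ d'.edge) (hpend : d.IsPendantIn M) :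
    d.Avoids d' := by
  have hnot : ∀ w ∈ d'.edge, ¬G.Adj d.fst w := fun w hw hadj => by
    have hw_snd : w = d.snd := hpend w ⟨_, hd', hw⟩ hadj
    exact hM.1.2 _ hd _ hd' hne w (hw_snd ▸ Sym2.mem_mk_right _ _) hw
  exact ⟨hnot _ (Sym2.mem_mk_left _ _), hnot _ (Sym2.mem_mk_right _ _)⟩

theorem IsSemistrongMatching.separated (hM : IsSemistrongMatching G M) {d d' : G.Dart}
    (hd : d.edge ∈ M) (hd' : d'.edge ∈ M) (hne : d.edge ≠ d'.edge) (hpend : d.IsPendantIn M)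
    (hpend' : d'.IsPendantIn M) : d.Separated d' :=
  ⟨hM.avoids hd hd' hne hpend, hM.avoids hd' hd hne.symm hpend'⟩

instance : DecidableRel fivePrism.Adj := by
  unfold fivePrism; infer_instance

theorem fivePrism_not_separated_of_separated_of_separated (d₁ d₂ d₃ : fivePrism.Dart)
    (h₁₂ : d₁.Separated d₂) (h₁₃ : d₁.Separated d₃) : ¬d₂.Separated d₃ := by
  revert d₁ d₂ d₃
  decide

/-- Every semistrong matching in the `5`-prism has size at most `2`. -/
theorem fivePrism_semistrong_matching_card_le_two
    (M : Finset (Sym2 (Fin 5 × Fin 2)))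
    (hM : IsSemistrongMatching fivePrism ↑M) :
    M.card ≤ 2 := by
  by_contra! hcard
  obtain ⟨e₁, he₁, e₂, he₂, e₃, he₃, h₁₂, h₁₃, h₂₃⟩ := Finset.two_lt_card.mp hcard
  obtain ⟨d₁, rfl, hd₁⟩ := hM.exists_dart_isPendantIn he₁
  obtain ⟨d₂, rfl, hd₂⟩ := hM.exists_dart_isPendantIn he₂
  obtain ⟨d₃, rfl, hd₃⟩ := hM.exists_dart_isPendantIn he₃
  exact fivePrism_not_separated_of_separated_of_separated d₁ d₂ d₃
    (hM.separated he₁ he₂ h₁₂ hd₁ hd₂) (hM.separated he₁ he₃ h₁₃ hd₁ hd₃)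
    (hM.separated he₂ he₃ h₂₃ hd₂ hd₃)
end

section
/- The semistrong chromatic index of the 5-prism (the Cartesian product of the 5-cycle C_5 with K_2) equals 8. -/
open SimpleGraph

variable {V : Type*}

/-! A set of edges is a semistrong matching exactly when its edges can be oriented `u → v`, with
`u` the pendant end, so that every other edge avoids `v` and the closed neighbourhood of `u`;
this makes the condition pairwise. In the 5-prism no three oriented edges are pairwise
compatible in this sense, so every colour class has at most two edges and the 15 edges need
8 colours. Conversely, eight two-edge semistrong matchings cover the 5-prism. -/

open scoped Finset

section

variable {G : SimpleGraph V}

def SemistrongCompatible (G : SimpleGraph V) (p q : V × V) : Prop :=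
  ∀ w ∈ [q.1, q.2], w ≠ p.1 ∧ w ≠ p.2 ∧ ¬G.Adj p.1 w

instance [DecidableEq V] [DecidableRel G.Adj] (p q : V × V) :
    Decidable (SemistrongCompatible G p q) :=
  inferInstanceAs (Decidable (∀ w ∈ [q.1, q.2], _))

theorem isSemistrongMatching_iff {M : Set (Sym2 V)} :
    IsSemistrongMatching G M ↔ ∃ o : Sym2 V → V × V, ∀ e ∈ M,
      s((o e).1, (o e).2) = e ∧ G.Adj (o e).1 (o e).2 ∧
        ∀ f ∈ M, f ≠ e → SemistrongCompatible G (o e) (o f) := by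
  constructor
  · rintro ⟨⟨hsub, hdisj⟩, hpend⟩
    have : ∀ e, ∃ p : V × V, s(p.1, p.2) = e ∧
        (e ∈ M → ∀ w ∈ edgeVerts M, G.Adj p.1 w → w = p.2) := by
      intro e
      by_cases he : e ∈ M
      · obtain ⟨u, v, rfl, h⟩ := hpend e he
        exact ⟨(u, v), rfl, fun _ => h⟩
      · exact ⟨Quot.out e, Quot.out_eq e, fun h => absurd h he⟩
    choose o hmk hpend using this
    refine ⟨o, fun e he => ⟨hmk e, ?_, fun f hf hfe w hw => ?_⟩⟩
    · have he' := hsub he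
      rwa [← hmk e, mem_edgeSet] at he'
    have hwf : w ∈ f := by
      rw [← hmk f]
      simpa using hw
    have hwe : w ∉ e := hdisj f hf e he hfe w hwf
    rw [← hmk e, Sym2.mem_iff, not_or] at hwe
    exact ⟨hwe.1, hwe.2, fun hadj => hwe.2 (hpend e he w ⟨f, hf, hwf⟩ hadj)⟩
  · rintro ⟨o, ho⟩
    refine ⟨⟨fun e he => ?_, fun e he f hf hef v hve hvf => ?_⟩, fun e he => ?_⟩
    · obtain ⟨hmk, hadj, -⟩ := ho e he
      rwa [← hmk, mem_edgeSet]
    · obtain ⟨hmk, -, hcomp⟩ := ho e he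
      obtain ⟨hmkf, -, -⟩ := ho f hf
      rw [← hmkf] at hvf
      have hv := hcomp f hf hef.symm v (by simpa using hvf)
      rw [← hmk, Sym2.mem_iff] at hve
      rcases hve with rfl | rfl
      exacts [hv.1 rfl, hv.2.1 rfl]
    · obtain ⟨hmk, hadj, hcomp⟩ := ho e he
      refine ⟨_, _, hmk.symm, fun w ⟨f, hf, hwf⟩ hw => ?_⟩
      by_cases hfe : f = e
      · rw [hfe, ← hmk, Sym2.mem_iff] at hwf
        rcases hwf with rfl | rfl
        exacts [absurd hw G.irrefl, rfl]
      · obtain ⟨hmkf, -, -⟩ := ho f hf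
        rw [← hmkf] at hwf
        exact absurd hw (hcomp f hf hfe w (by simpa using hwf)).2.2

theorem IsSemistrongMatching.subset {M N : Set (Sym2 V)} (hM : IsSemistrongMatching G M)
    (hNM : N ⊆ M) : IsSemistrongMatching G N := by
  obtain ⟨o, ho⟩ := isSemistrongMatching_iff.1 hM
  refine isSemistrongMatching_iff.2 ⟨o, fun e he => ?_⟩
  obtain ⟨hmk, hadj, hcomp⟩ := ho e (hNM he)
  exact ⟨hmk, hadj, fun f hf => hcomp f (hNM hf)⟩

theorem isSemistrongMatching_empty : IsSemistrongMatching G ∅ :=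
  isSemistrongMatching_iff.2 ⟨Quot.out, by simp⟩

theorem isSemistrongMatching_pair {p q : V × V} (hp : G.Adj p.1 p.2) (hq : G.Adj q.1 q.2)
    (hpq : SemistrongCompatible G p q) (hqp : SemistrongCompatible G q p) :
    IsSemistrongMatching G {s(p.1, p.2), s(q.1, q.2)} := by
  classical
  refine isSemistrongMatching_iff.2 ⟨fun e => if e = s(p.1, p.2) then p else q, ?_⟩
  rintro e (rfl | rfl)
  · refine ⟨by simp, by simpa using hp, ?_⟩
    rintro f (rfl | rfl) hf
    exacts [absurd rfl hf, by simpa [hf] using hpq]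
  · by_cases hqp' : s(q.1, q.2) = s(p.1, p.2)
    · refine ⟨by simp [hqp'], by simpa [hqp'] using hp, ?_⟩
      rintro f (rfl | rfl) hf
      exacts [absurd hqp'.symm hf, absurd rfl hf]
    · refine ⟨by simp [hqp'], by simpa [hqp'] using hq, ?_⟩
      rintro f (rfl | rfl) hf
      exacts [by simpa [hqp'] using hqp, absurd rfl hf]

theorem HasSemistrongEdgeColoring.of_cover {k : ℕ} (M : Fin k → Set (Sym2 V))
    (hM : ∀ i, IsSemistrongMatching G (M i)) (hcover : ∀ e ∈ G.edgeSet, ∃ i, e ∈ M i) :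
    HasSemistrongEdgeColoring G k := by
  classical
  let c : Sym2 V → ℕ := fun e => if h : ∃ i, e ∈ M i then h.choose else k
  have hc : ∀ e ∈ G.edgeSet, ∃ h : ∃ i, e ∈ M i, c e = h.choose :=
    fun e he => ⟨hcover e he, dif_pos (hcover e he)⟩
  refine ⟨c, fun e he => ?_, fun i => ?_⟩
  · obtain ⟨h, hce⟩ := hc e he
    exact hce ▸ h.choose.is_lt
  by_cases hi : i < k
  · refine (hM ⟨i, hi⟩).subset ?_
    rintro e ⟨he, rfl⟩
    obtain ⟨h, hce⟩ := hc e he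
    simpa only [hce] using h.choose_spec
  · refine isSemistrongMatching_empty.subset ?_
    rintro e ⟨he, rfl⟩
    obtain ⟨h, hce⟩ := hc e he
    exact hi (hce ▸ h.choose.is_lt)

theorem HasSemistrongEdgeColoring.card_edgeFinset_le_mul [Fintype G.edgeSet] {k m : ℕ}
    (hG : HasSemistrongEdgeColoring G k)
    (hm : ∀ M : Finset (Sym2 V), IsSemistrongMatching G M → #M ≤ m) :
    #G.edgeFinset ≤ k * m := by
  obtain ⟨c, hck, hc⟩ := hG
  calc #G.edgeFinset = ∑ i ∈ Finset.range k, #{e ∈ G.edgeFinset | c e = i} :=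
        Finset.card_eq_sum_card_fiberwise fun e he =>
          Finset.mem_range.2 (hck e (mem_edgeFinset.1 he))
    _ ≤ ∑ _i ∈ Finset.range k, m :=
        Finset.sum_le_sum fun i _ => hm _ (by convert hc i; ext; simp)
    _ = k * m := by simp

end

instance inst_s9 : DecidableRel fivePrism.Adj := fun _ _ => decidable_of_iff _ boxProd_adj.symm

theorem fivePrism_card_edgeFinset : #fivePrism.edgeFinset = 15 := by
  decide +kernel

set_option synthInstance.maxSize 2000 in
theorem fivePrism_not_compatible_triple :
    ∀ p : (Fin 5 × Fin 2) × (Fin 5 × Fin 2), fivePrism.Adj p.1 p.2 →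
    ∀ q : (Fin 5 × Fin 2) × (Fin 5 × Fin 2), fivePrism.Adj q.1 q.2 →
    SemistrongCompatible fivePrism p q → SemistrongCompatible fivePrism q p →
    ∀ r : (Fin 5 × Fin 2) × (Fin 5 × Fin 2), fivePrism.Adj r.1 r.2 →
    SemistrongCompatible fivePrism p r → SemistrongCompatible fivePrism r p →
    SemistrongCompatible fivePrism q r → SemistrongCompatible fivePrism r q → False := by
  decide +kernel

theorem fivePrism_card_le_two (M : Finset (Sym2 (Fin 5 × Fin 2)))
    (hM : IsSemistrongMatching fivePrism M) : #M ≤ 2 := by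
  by_contra! h
  obtain ⟨e, he, f, hf, g, hg, hef, heg, hfg⟩ := Finset.two_lt_card.1 h
  obtain ⟨o, ho⟩ := isSemistrongMatching_iff.1 hM
  obtain ⟨-, he', hec⟩ := ho e he
  obtain ⟨-, hf', hfc⟩ := ho f hf
  obtain ⟨-, hg', hgc⟩ := ho g hg
  exact fivePrism_not_compatible_triple _ he' _ hf' (hec f hf hef.symm) (hfc e he hef)
    _ hg' (hec g hg heg.symm) (hgc e he heg) (hfc g hg hfg.symm) (hgc f hf hfg)

/-- Each edge is written `(pendant end, other end)`. -/
def fivePrismCover :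
    Fin 8 → ((Fin 5 × Fin 2) × (Fin 5 × Fin 2)) × ((Fin 5 × Fin 2) × (Fin 5 × Fin 2)) :=
  ![(((0, 1), (0, 0)), ((3, 0), (2, 0))),
    (((1, 1), (1, 0)), ((4, 0), (3, 0))),
    (((2, 1), (2, 0)), ((0, 0), (4, 0))),
    (((3, 1), (3, 0)), ((1, 0), (0, 0))),
    (((4, 1), (4, 0)), ((2, 0), (1, 0))),
    (((0, 1), (1, 1)), ((3, 1), (2, 1))),
    (((1, 1), (2, 1)), ((4, 1), (3, 1))),
    (((4, 1), (0, 1)), ((2, 1), (1, 1)))]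

theorem fivePrism_hasSemistrongEdgeColoring : HasSemistrongEdgeColoring fivePrism 8 := by
  have hcover : ∀ e ∈ fivePrism.edgeSet, ∃ i,
      e = s((fivePrismCover i).1.1, (fivePrismCover i).1.2) ∨
        e = s((fivePrismCover i).2.1, (fivePrismCover i).2.2) := by
    decide +kernel
  have hmatch : ∀ i, fivePrism.Adj (fivePrismCover i).1.1 (fivePrismCover i).1.2 ∧
      fivePrism.Adj (fivePrismCover i).2.1 (fivePrismCover i).2.2 ∧
      SemistrongCompatible fivePrism (fivePrismCover i).1 (fivePrismCover i).2 ∧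
      SemistrongCompatible fivePrism (fivePrismCover i).2 (fivePrismCover i).1 := by
    decide +kernel
  refine .of_cover _ (fun i => ?_) hcover
  obtain ⟨hp, hq, hpq, hqp⟩ := hmatch i
  exact isSemistrongMatching_pair hp hq hpq hqp

/-- The semistrong chromatic index of the `5`-prism equals `8`. -/
theorem ssChromIdx_fivePrism : ssChromIdx fivePrism = 8 := by
  refine le_antisymm (Nat.sInf_le fivePrism_hasSemistrongEdgeColoring)
    (le_csInf ⟨8, fivePrism_hasSemistrongEdgeColoring⟩ fun k hk => ?_)
  have hbound := hk.card_edgeFinset_le_mul fivePrism_card_le_two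
  rw [fivePrism_card_edgeFinset] at hbound
  omega
end

section
/- For every finite tree T (a finite connected acyclic simple graph) with at least one edge and diameter at most 4, the semistrong chromatic index of T equals Δ(T). -/
open SimpleGraph

variable {V : Type*}

/-!
Root the tree at a vertex `r` and give each edge the colour of its endpoint farther from `r`:
the children of `r` get distinct colours, and the children of any other vertex `p` get the
colour of `p` shifted by distinct nonzero amounts modulo `Δ`. Since `p` also has a parent, it has
at most `Δ - 1` children, so this is a proper `Δ`-edge-colouring; conversely the edges at a vertex
of maximum degree need `Δ` colours.

If the diameter is at most `4`, every edge `uv` has an endpoint, say `u`, all of whose other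
neighbours are leaves, for otherwise the tree would contain a path of length `5` through `uv`.
In a colour class containing `uv`, another neighbour `w` of `u` could only be covered by `uw`,
which meets `uv`; so `u` has degree one in the induced subgraph, and every proper edge-colouring
is semistrong.
-/

lemma Nat.eq_of_add_mod_eq_add_mod {a s t D : ℕ} (hs : s < D) (ht : t < D)
    (h : (a + s) % D = (a + t) % D) : s = t := by
  have := Nat.ModEq.add_left_cancel' a h
  rwa [Nat.ModEq, Nat.mod_eq_of_lt hs, Nat.mod_eq_of_lt ht] at this

namespace SimpleGraph

variable {G : SimpleGraph V}

section EdgeColorings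

variable (G) in
def IsProperEdgeColoring (k : ℕ) (c : Sym2 V → ℕ) : Prop :=
  (∀ e ∈ G.edgeSet, c e < k) ∧
    ∀ ⦃u v w : V⦄, G.Adj u v → G.Adj u w → v ≠ w → c s(u, v) ≠ c s(u, w)

variable {k : ℕ} {c : Sym2 V → ℕ}

lemma IsProperEdgeColoring.isMatchingSet (hc : G.IsProperEdgeColoring k c) (i : ℕ) :
    IsMatchingSet G {e | e ∈ G.edgeSet ∧ c e = i} := by
  refine ⟨fun e he => he.1, fun e he f hf hef v hve hvf => ?_⟩
  obtain ⟨y, rfl⟩ := Sym2.mem_iff_exists.1 hve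
  obtain ⟨z, rfl⟩ := Sym2.mem_iff_exists.1 hvf
  exact hc.2 he.1 hf.1 (by rintro rfl; exact hef rfl) (he.2.trans hf.2.symm)

lemma IsProperEdgeColoring.maxDegree_le [Fintype V] [DecidableRel G.Adj]
    (hc : G.IsProperEdgeColoring k c) : G.maxDegree ≤ k := by
  refine G.maxDegree_le_of_forall_degree_le k fun v => ?_
  rw [← card_neighborFinset_eq_degree, ← Finset.card_range k]
  refine Finset.card_le_card_of_injOn (fun w => c s(v, w)) (fun w hw => ?_) fun w hw x hx h => ?_
  · exact Finset.mem_range.2 (hc.1 _ ((G.mem_neighborFinset v w).1 hw))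
  · by_contra hwx
    exact hc.2 ((G.mem_neighborFinset v w).1 hw) ((G.mem_neighborFinset v x).1 hx) hwx h

lemma HasSemistrongEdgeColoring.exists_isProperEdgeColoring
    (h : HasSemistrongEdgeColoring G k) : ∃ c, G.IsProperEdgeColoring k c := by
  obtain ⟨c, hlt, hss⟩ := h
  refine ⟨c, hlt, fun u v w huv huw hvw hc => ?_⟩
  have hne : s(u, v) ≠ s(u, w) := fun h => hvw (Sym2.congr_right.1 h)
  exact (hss (c s(u, v))).1.2 _ ⟨huv, rfl⟩ _ ⟨huw, hc.symm⟩ hne u (Sym2.mem_mk_left u v)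
    (Sym2.mem_mk_left u w)

end EdgeColorings

section Semistrong

variable (G) in
def OtherNeighborsAreLeaves (u v : V) : Prop :=
  ∀ w, G.Adj u w → w ≠ v → ∀ x, G.Adj w x → x = u

lemma isSemistrongMatching_of_otherNeighborsAreLeaves {M : Set (Sym2 V)}
    (hM : IsMatchingSet G M)
    (hleaf : ∀ e ∈ M, ∃ u v, e = s(u, v) ∧ G.OtherNeighborsAreLeaves u v) :
    IsSemistrongMatching G M := by
  refine ⟨hM, fun e he => ?_⟩
  obtain ⟨u, v, rfl, huv⟩ := hleaf e he
  refine ⟨u, v, rfl, fun w ⟨f, hf, hwf⟩ huw => ?_⟩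
  by_contra hwv
  obtain ⟨x, rfl⟩ := Sym2.mem_iff_exists.1 hwf
  obtain rfl : x = u := huv w huw hwv x (hM.1 hf)
  refine hM.2 _ he _ hf (fun h => ?_) x (Sym2.mem_mk_left x v) (Sym2.mem_mk_right w x)
  rcases Sym2.eq_iff.1 h with ⟨hxw, -⟩ | ⟨-, hvw⟩
  · exact huw.ne hxw
  · exact hwv hvw.symm

lemma IsProperEdgeColoring.hasSemistrongEdgeColoring {k : ℕ} {c : Sym2 V → ℕ}
    (hc : G.IsProperEdgeColoring k c)
    (hleaf : ∀ ⦃u v⦄, G.Adj u v →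
      G.OtherNeighborsAreLeaves u v ∨ G.OtherNeighborsAreLeaves v u) :
    HasSemistrongEdgeColoring G k := by
  refine ⟨c, hc.1, fun i => isSemistrongMatching_of_otherNeighborsAreLeaves
    (hc.isMatchingSet i) fun e he => ?_⟩
  induction e using Sym2.ind with
  | h u v =>
    rcases hleaf he.1 with huv | hvu
    · exact ⟨u, v, rfl, huv⟩
    · exact ⟨v, u, Sym2.eq_swap, hvu⟩

end Semistrong

section TreeDistances

variable {r : V}

lemma Connected.exists_adj_dist_add_one_eq (hG : G.Connected) {v : V} (hv : v ≠ r) :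
    ∃ p, G.Adj p v ∧ G.dist r p + 1 = G.dist r v := by
  obtain ⟨P, -, hP⟩ := hG.exists_path_of_dist r v
  have hPnil : ¬P.Nil := fun h => hv h.eq.symm
  refine ⟨P.penultimate, P.adj_penultimate hPnil, ?_⟩
  have hle := G.dist_le P.dropLast
  have hge : G.dist r v ≤ G.dist r P.penultimate + 1 :=
    hG.dist_triangle.trans (by rw [dist_eq_one_iff_adj.2 (P.adj_penultimate hPnil)])
  have := P.length_dropLast_add_one hPnil
  omega

lemma IsTree.eq_of_adj_of_dist_add_one_eq (hG : G.IsTree) {p q v : V} (hp : G.Adj p v)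
    (hq : G.Adj q v) (hpv : G.dist r p + 1 = G.dist r v) (hqv : G.dist r q + 1 = G.dist r v) :
    p = q := by
  obtain ⟨P, -, hP⟩ := hG.connected.exists_path_of_dist r p
  obtain ⟨Q, -, hQ⟩ := hG.connected.exists_path_of_dist r q
  have hPp := (P.concat hp).isPath_of_length_eq_dist (by rw [Walk.length_concat, hP, hpv])
  have hQp := (Q.concat hq).isPath_of_length_eq_dist (by rw [Walk.length_concat, hQ, hqv])
  have := (hG.isAcyclic.subsingleton_path r v).elim ⟨_, hPp⟩ ⟨_, hQp⟩
  exact (Walk.concat_inj (congrArg Subtype.val this)).1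

lemma IsTree.dist_add_one_eq_of_adj_of_adj (hG : G.IsTree) {a b c : V} (hab : G.Adj a b)
    (hbc : G.Adj b c) (hac : a ≠ c) (h : G.dist r a + 1 = G.dist r b) :
    G.dist r b + 1 = G.dist r c := by
  rcases hG.dist_eq_dist_add_one_of_adj r hbc with h' | h'
  · exact absurd (hG.eq_of_adj_of_dist_add_one_eq hab hbc.symm h h'.symm) hac
  · exact h'.symm

theorem IsTree.otherNeighborsAreLeaves_of_dist_le_four (hG : G.IsTree)
    (hdiam : ∀ u v : V, G.dist u v ≤ 4) ⦃u v : V⦄ (huv : G.Adj u v) :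
    G.OtherNeighborsAreLeaves u v ∨ G.OtherNeighborsAreLeaves v u := by
  by_contra h
  simp only [OtherNeighborsAreLeaves, not_or, not_forall] at h
  obtain ⟨⟨u₁, hu₁, hu₁v, u₂, hu₂, hu₂u⟩, ⟨v₁, hv₁, hv₁u, v₂, hv₂, hv₂v⟩⟩ := h
  -- distances from `u₂` grow by one along the walk `u₂ u₁ u v v₁ v₂`, which never backtracks
  have d₁ : G.dist u₂ u₂ + 1 = G.dist u₂ u₁ := by
    rw [dist_self, dist_eq_one_iff_adj.2 hu₂.symm]
  have d₂ := hG.dist_add_one_eq_of_adj_of_adj hu₂.symm hu₁.symm hu₂u d₁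
  have d₃ := hG.dist_add_one_eq_of_adj_of_adj hu₁.symm huv hu₁v d₂
  have d₄ := hG.dist_add_one_eq_of_adj_of_adj huv hv₁ (Ne.symm hv₁u) d₃
  have d₅ := hG.dist_add_one_eq_of_adj_of_adj hv₁ hv₂ (Ne.symm hv₂v) d₄
  have := hdiam u₂ v₂
  simp only [dist_self] at d₁
  omega

end TreeDistances

section RootedColoring

variable [Fintype V] [DecidableRel G.Adj] (G) (r : V)

noncomputable def childFinset (p : V) : Finset V :=
  {v ∈ G.neighborFinset p | G.dist r p + 1 = G.dist r v}

variable {G r}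

lemma mem_childFinset {p v : V} :
    v ∈ G.childFinset r p ↔ G.Adj p v ∧ G.dist r p + 1 = G.dist r v := by
  simp only [childFinset, Finset.mem_filter, mem_neighborFinset]

lemma card_childFinset_le_degree (p : V) : (G.childFinset r p).card ≤ G.degree p := by
  rw [← card_neighborFinset_eq_degree]
  exact Finset.card_le_card (Finset.filter_subset _ _)

/-- A non-root vertex also has its parent as a neighbour. -/
lemma Connected.card_childFinset_lt_degree (hG : G.Connected) {p : V} (hp : p ≠ r) :
    (G.childFinset r p).card < G.degree p := by
  obtain ⟨q, hqp, hq⟩ := hG.exists_adj_dist_add_one_eq hp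
  rw [← card_neighborFinset_eq_degree]
  refine Finset.card_lt_card ((Finset.ssubset_iff_of_subset (Finset.filter_subset _ _)).2 ?_)
  refine ⟨q, (G.mem_neighborFinset p q).2 hqp.symm, fun hq' => ?_⟩
  have := (mem_childFinset.1 hq').2
  omega

variable [DecidableEq V] (G r)

noncomputable def childShift (p v : V) : ℕ :=
  (if p = r then 0 else 1) + (G.childFinset r p).toList.idxOf v

/-- The colour of the edge joining `v` to its parent in the tree rooted at `r`. -/
noncomputable def parentEdgeColor (v : V) : ℕ :=
  if h : ∃ p, G.Adj p v ∧ G.dist r p + 1 = G.dist r v then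
    (parentEdgeColor h.choose + G.childShift r h.choose v) % G.maxDegree
  else 0
termination_by G.dist r v
decreasing_by have := h.choose_spec.2; omega

noncomputable def rootedEdgeColoring : Sym2 V → ℕ :=
  Sym2.lift ⟨fun x y =>
    if G.dist r x < G.dist r y then G.parentEdgeColor r y
    else if G.dist r y < G.dist r x then G.parentEdgeColor r x else 0,
    fun x y => by dsimp only; split_ifs <;> first | rfl | omega⟩

variable {G r}

lemma rootedEdgeColoring_mk {x y : V} (h : G.dist r x + 1 = G.dist r y) :
    G.rootedEdgeColoring r s(x, y) = G.parentEdgeColor r y := by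
  simp only [rootedEdgeColoring, Sym2.lift_mk]
  rw [if_pos (by omega)]

lemma Connected.childShift_lt (hG : G.Connected) {p v : V} (hv : v ∈ G.childFinset r p) :
    G.childShift r p v < G.maxDegree := by
  have hidx : (G.childFinset r p).toList.idxOf v < (G.childFinset r p).card := by
    rwa [← Finset.length_toList, List.idxOf_lt_length_iff, Finset.mem_toList]
  have := G.degree_le_maxDegree p
  unfold childShift
  split_ifs with hp
  · have := card_childFinset_le_degree (G := G) (r := r) p
    omega
  · have := hG.card_childFinset_lt_degree hp
    omega

lemma childShift_injOn (p : V) : Set.InjOn (G.childShift r p) (G.childFinset r p) :=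
  fun v hv w _ h => (List.idxOf_inj (Finset.mem_toList.2 hv)).1 (by
    simpa only [childShift, Nat.add_left_cancel_iff] using h)

lemma childShift_pos {p : V} (hp : p ≠ r) (v : V) : 0 < G.childShift r p v := by
  simp [childShift, hp]

lemma parentEdgeColor_lt (hD : 0 < G.maxDegree) (v : V) :
    G.parentEdgeColor r v < G.maxDegree := by
  rw [parentEdgeColor]
  split_ifs
  · exact Nat.mod_lt _ hD
  · exact hD

lemma IsTree.parentEdgeColor_eq (hG : G.IsTree) {p v : V} (hpv : G.Adj p v)
    (h : G.dist r p + 1 = G.dist r v) :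
    G.parentEdgeColor r v = (G.parentEdgeColor r p + G.childShift r p v) % G.maxDegree := by
  have hex : ∃ p, G.Adj p v ∧ G.dist r p + 1 = G.dist r v := ⟨p, hpv, h⟩
  rw [parentEdgeColor, dif_pos hex]
  obtain ⟨hadj, hdist⟩ := hex.choose_spec
  rw [hG.eq_of_adj_of_dist_add_one_eq hadj hpv hdist h]

lemma IsTree.parentEdgeColor_ne_of_adj (hG : G.IsTree) {p v : V} (hpr : p ≠ r)
    (hpv : G.Adj p v) (hp : G.dist r p + 1 = G.dist r v) :
    G.parentEdgeColor r v ≠ G.parentEdgeColor r p := by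
  have hD : 0 < G.maxDegree :=
    (G.degree_pos_iff_exists_adj p).2 ⟨v, hpv⟩ |>.trans_le (G.degree_le_maxDegree p)
  rw [hG.parentEdgeColor_eq hpv hp]
  intro h
  have h0 : (G.parentEdgeColor r p + G.childShift r p v) % G.maxDegree =
      (G.parentEdgeColor r p + 0) % G.maxDegree := by
    rw [h, add_zero, Nat.mod_eq_of_lt (parentEdgeColor_lt hD p)]
  exact (childShift_pos hpr v).ne' (Nat.eq_of_add_mod_eq_add_mod
    (hG.connected.childShift_lt (mem_childFinset.2 ⟨hpv, hp⟩)) hD h0)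

lemma IsTree.parentEdgeColor_injOn_childFinset (hG : G.IsTree) (p : V) :
    Set.InjOn (G.parentEdgeColor r) (G.childFinset r p) := by
  intro v hv w hw h
  obtain ⟨hpv, hdv⟩ := mem_childFinset.1 hv
  obtain ⟨hpw, hdw⟩ := mem_childFinset.1 hw
  rw [hG.parentEdgeColor_eq hpv hdv, hG.parentEdgeColor_eq hpw hdw] at h
  exact childShift_injOn p hv hw (Nat.eq_of_add_mod_eq_add_mod
    (hG.connected.childShift_lt hv) (hG.connected.childShift_lt hw) h)

end RootedColoring

theorem IsTree.isProperEdgeColoring_rootedEdgeColoring [Fintype V] [DecidableEq V]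
    [DecidableRel G.Adj] (hG : G.IsTree) (r : V) :
    G.IsProperEdgeColoring G.maxDegree (G.rootedEdgeColoring r) := by
  refine ⟨fun e he => ?_, fun u v w huv huw hvw => ?_⟩
  · induction e using Sym2.ind with
    | h x y =>
      have hD : 0 < G.maxDegree :=
        (G.degree_pos_iff_exists_adj x).2 ⟨y, he⟩ |>.trans_le (G.degree_le_maxDegree x)
      rcases hG.dist_eq_dist_add_one_of_adj r he with h | h
      · rw [Sym2.eq_swap, rootedEdgeColoring_mk h.symm]
        exact parentEdgeColor_lt hD x
      · rw [rootedEdgeColoring_mk h.symm]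
        exact parentEdgeColor_lt hD y
  rcases hG.dist_eq_dist_add_one_of_adj r huv with hv | hv <;>
    rcases hG.dist_eq_dist_add_one_of_adj r huw with hw | hw
  · exact absurd (hG.eq_of_adj_of_dist_add_one_eq huv.symm huw.symm hv.symm hw.symm) hvw
  · have hur : u ≠ r := by rintro rfl; simp at hv
    rw [Sym2.eq_swap, rootedEdgeColoring_mk hv.symm, rootedEdgeColoring_mk hw.symm]
    exact (hG.parentEdgeColor_ne_of_adj hur huw hw.symm).symm
  · have hur : u ≠ r := by rintro rfl; simp at hw
    rw [rootedEdgeColoring_mk hv.symm, Sym2.eq_swap, rootedEdgeColoring_mk hw.symm]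
    exact hG.parentEdgeColor_ne_of_adj hur huv hv.symm
  · rw [rootedEdgeColoring_mk hv.symm, rootedEdgeColoring_mk hw.symm]
    exact fun h => hvw (hG.parentEdgeColor_injOn_childFinset u
      (mem_childFinset.2 ⟨huv, hv.symm⟩) (mem_childFinset.2 ⟨huw, hw.symm⟩) h)

theorem IsTree.hasSemistrongEdgeColoring_maxDegree [Fintype V] [DecidableRel G.Adj]
    (hG : G.IsTree) (hdiam : ∀ u v : V, G.dist u v ≤ 4) :
    HasSemistrongEdgeColoring G G.maxDegree := by
  classical
  exact (hG.isProperEdgeColoring_rootedEdgeColoring hG.connected.nonempty.some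
    ).hasSemistrongEdgeColoring (hG.otherNeighborsAreLeaves_of_dist_le_four hdiam)

end SimpleGraph

theorem ssChromIdx_tree_small_diam_general {V : Type*} [Fintype V]
    (T : SimpleGraph V) [DecidableRel T.Adj] (hT : T.IsTree)
    (hdiam : ∀ u v : V, T.dist u v ≤ 4) :
    ssChromIdx T = T.maxDegree := by
  have hup := hT.hasSemistrongEdgeColoring_maxDegree hdiam
  refine le_antisymm (Nat.sInf_le hup) (le_csInf ⟨_, hup⟩ fun k hk => ?_)
  obtain ⟨c, hc⟩ := hk.exists_isProperEdgeColoring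
  exact hc.maxDegree_le

/-- For every finite tree `T` with at least one edge and diameter at most `4`,
the semistrong chromatic index of `T` equals `Δ(T)`. -/
theorem ssChromIdx_tree_small_diam {V : Type*} [Fintype V] [DecidableEq V]
    (T : SimpleGraph V) [DecidableRel T.Adj] (hT : T.IsTree)
    (hE : T.edgeSet.Nonempty) (hdiam : ∀ u v : V, T.dist u v ≤ 4) :
    ssChromIdx T = T.maxDegree :=
  ssChromIdx_tree_small_diam_general T hT hdiam
end

section
/- For the path P_6 on 6 vertices (5 edges), the 1-degenerate chromatic index equals 2 while the semistrong chromatic index equals 3; in particular χ'_1(P_6) < χ''_ss(P_6). -/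
open SimpleGraph

variable {V : Type*}

/-- `M` is a 1-degenerate matching of `G`: a matching such that the subgraph of
`G` induced by the endvertices of the edges of `M` is acyclic. -/
def IsOneDegenerateMatching (G : SimpleGraph V) (M : Set (Sym2 V)) : Prop :=
  IsMatchingSet G M ∧ (G.induce (edgeVerts M)).IsAcyclic

/-- `G` has a decomposition of its edge set into (at most) `k` 1-degenerate
matchings. -/
def HasOneDegenerateEdgeColoring (G : SimpleGraph V) (k : ℕ) : Prop :=
  ∃ c : Sym2 V → ℕ, (∀ e ∈ G.edgeSet, c e < k) ∧
    ∀ i : ℕ, IsOneDegenerateMatching G {e | e ∈ G.edgeSet ∧ c e = i}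

/-- The 1-degenerate chromatic index `χ'_1(G)`. -/
noncomputable def oneDegChromIdx (G : SimpleGraph V) : ℕ :=
  sInf {k | HasOneDegenerateEdgeColoring G k}

/-!
Colouring the edge `s(i, i + 1)` of a path by `i % 2` splits it into two matchings, which are
1-degenerate because the path is a forest; colouring by `i % 3` gives semistrong matchings.
Conversely, a single colour cannot take two adjacent edges, and a proper 2-colouring of `P₆`
alternates, so the middle edge shares its colour with both end edges: their inner vertices are
matched neighbours of both endvertices of the middle edge.
-/

lemma Nat.mod_ne_add_mod (i : ℕ) {d m : ℕ} (hd : 0 < d) (hdm : d < m) : i % m ≠ (i + d) % m := by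
  intro h
  have hdvd := (Nat.modEq_iff_dvd' (Nat.le_add_right i d)).1 h
  rw [Nat.add_sub_cancel_left] at hdvd
  exact absurd (Nat.le_of_dvd hd hdvd) (by omega)

namespace SimpleGraph

variable {G : SimpleGraph V}

lemma edgeColor_ne_of_adj_of_adj {c : Sym2 V → ℕ}
    (hc : ∀ i, IsMatchingSet G {e | e ∈ G.edgeSet ∧ c e = i}) {a b d : V}
    (hab : G.Adj a b) (hbd : G.Adj b d) (had : a ≠ d) : c s(a, b) ≠ c s(b, d) := fun h =>
  (hc _).2 s(a, b) ⟨hab, rfl⟩ s(b, d) ⟨hbd, h.symm⟩ (by simp [hab.ne, had]) b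
    (Sym2.mem_mk_right a b) (Sym2.mem_mk_left b d)

lemma edgeColor_eq_of_lt_two {c : Sym2 V → ℕ}
    (hc : ∀ i, IsMatchingSet G {e | e ∈ G.edgeSet ∧ c e = i})
    (hlt : ∀ e ∈ G.edgeSet, c e < 2) {a b d f : V} (hab : G.Adj a b) (hbd : G.Adj b d)
    (hdf : G.Adj d f) (had : a ≠ d) (hbf : b ≠ f) : c s(a, b) = c s(d, f) := by
  have h₁ := edgeColor_ne_of_adj_of_adj hc hab hbd had
  have h₂ := edgeColor_ne_of_adj_of_adj hc hbd hdf hbf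
  have := hlt s(a, b) hab
  have := hlt s(b, d) hbd
  have := hlt s(d, f) hdf
  omega

lemma IsSemistrongMatching.mk_notMem_of_adj {M : Set (Sym2 V)} (hM : IsSemistrongMatching G M)
    {x u v y : V} (hx : x ∈ edgeVerts M) (hy : y ∈ edgeVerts M) (hxu : G.Adj x u)
    (hvy : G.Adj v y) (hxv : x ≠ v) (huy : u ≠ y) : s(u, v) ∉ M := by
  intro huv
  obtain ⟨u', v', he, hdeg⟩ := hM.2 _ huv
  rcases Sym2.eq_iff.1 he with ⟨rfl, rfl⟩ | ⟨rfl, rfl⟩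
  · exact hxv (hdeg x hx hxu.symm)
  · exact huy (hdeg y hy hvy).symm

lemma HasOneDegenerateEdgeColoring.mono {k l : ℕ} (hkl : k ≤ l) :
    HasOneDegenerateEdgeColoring G k → HasOneDegenerateEdgeColoring G l
  | ⟨c, hlt, hc⟩ => ⟨c, fun e he => (hlt e he).trans_le hkl, hc⟩

lemma HasSemistrongEdgeColoring.mono {k l : ℕ} (hkl : k ≤ l) :
    HasSemistrongEdgeColoring G k → HasSemistrongEdgeColoring G l
  | ⟨c, hlt, hc⟩ => ⟨c, fun e he => (hlt e he).trans_le hkl, hc⟩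

lemma not_hasOneDegenerateEdgeColoring_one {a b d : V} (hab : G.Adj a b) (hbd : G.Adj b d)
    (had : a ≠ d) : ¬ HasOneDegenerateEdgeColoring G 1 := by
  rintro ⟨c, hlt, hc⟩
  have := hlt s(a, b) hab
  have := hlt s(b, d) hbd
  exact edgeColor_ne_of_adj_of_adj (fun i => (hc i).1) hab hbd had (by omega)

lemma not_hasSemistrongEdgeColoring_two {v₀ v₁ v₂ v₃ v₄ v₅ : V} (h₀₁ : G.Adj v₀ v₁)
    (h₁₂ : G.Adj v₁ v₂) (h₂₃ : G.Adj v₂ v₃) (h₃₄ : G.Adj v₃ v₄) (h₄₅ : G.Adj v₄ v₅)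
    (h₀₂ : v₀ ≠ v₂) (h₁₃ : v₁ ≠ v₃) (h₂₄ : v₂ ≠ v₄) (h₃₅ : v₃ ≠ v₅) :
    ¬ HasSemistrongEdgeColoring G 2 := by
  rintro ⟨c, hlt, hc⟩
  have hmatch := fun i => (hc i).1
  have hleft := edgeColor_eq_of_lt_two hmatch hlt h₀₁ h₁₂ h₂₃ h₀₂ h₁₃
  have hright := edgeColor_eq_of_lt_two hmatch hlt h₂₃ h₃₄ h₄₅ h₂₄ h₃₅
  exact (hc (c s(v₂, v₃))).mk_notMem_of_adj ⟨s(v₀, v₁), ⟨h₀₁, hleft⟩, Sym2.mem_mk_right _ _⟩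
    ⟨s(v₄, v₅), ⟨h₄₅, hright.symm⟩, Sym2.mem_mk_left _ _⟩ h₁₂ h₃₄ h₁₃ h₂₄ ⟨h₂₃, rfl⟩

lemma pathGraph_mem_edges_of_le_of_lt {n : ℕ} {i j : Fin n} (hij : i.val + 1 = j.val) :
    ∀ {u w : Fin n} (p : (pathGraph n).Walk u w), u.val ≤ i.val → i.val < w.val →
      s(i, j) ∈ p.edges
  | _, _, .nil, hu, hw => absurd (hu.trans_lt hw) (lt_irrefl _)
  | u, _, .cons (v := x) hux p, hu, hw => by
    rw [Walk.edges_cons, List.mem_cons]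
    by_cases hx : x.val ≤ i.val
    · exact .inr (pathGraph_mem_edges_of_le_of_lt hij p hx hw)
    · have := pathGraph_adj.1 hux
      exact .inl (Sym2.eq_iff.2 (.inl ⟨Fin.ext (by omega), Fin.ext (by omega)⟩))

lemma pathGraph_isAcyclic (n : ℕ) : (pathGraph n).IsAcyclic := by
  refine isAcyclic_iff_forall_adj_isBridge.2 fun u w huw => ?_
  rcases pathGraph_adj.1 huw with h | h
  · exact isBridge_iff_forall_walk_mem_edges.2 fun p =>
      pathGraph_mem_edges_of_le_of_lt h p le_rfl (by omega)
  · rw [Sym2.eq_swap]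
    exact isBridge_iff_forall_walk_mem_edges.2 fun p =>
      pathGraph_mem_edges_of_le_of_lt h p le_rfl (by omega)

lemma exists_eq_of_mem_pathGraph_edgeSet {n : ℕ} {e : Sym2 (Fin n)}
    (he : e ∈ (pathGraph n).edgeSet) : ∃ i j : Fin n, i.val + 1 = j.val ∧ e = s(i, j) := by
  induction e using Sym2.ind with
  | h a b =>
    rcases pathGraph_adj.1 he with h | h
    · exact ⟨a, b, h, rfl⟩
    · exact ⟨b, a, h, Sym2.eq_swap⟩

def pathEdgeColoring (n m : ℕ) : Sym2 (Fin n) → ℕ :=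
  Sym2.lift ⟨fun i j => min i.val j.val % m, fun i j => by simp only [min_comm]⟩

lemma pathEdgeColoring_mk {n m : ℕ} {i j : Fin n} (hij : i.val + 1 = j.val) :
    pathEdgeColoring n m s(i, j) = i.val % m := by
  simp only [pathEdgeColoring, Sym2.lift_mk]
  rw [min_eq_left (by omega)]

lemma pathGraph_isMatchingSet_pathEdgeColoring (n : ℕ) {m : ℕ} (hm : 2 ≤ m) (r : ℕ) :
    IsMatchingSet (pathGraph n)
      {e | e ∈ (pathGraph n).edgeSet ∧ pathEdgeColoring n m e = r} := by
  refine ⟨fun e he => he.1, ?_⟩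
  rintro e ⟨he, hce⟩ f ⟨hf, hcf⟩ hef v hve hvf
  obtain ⟨i, j, hij, rfl⟩ := exists_eq_of_mem_pathGraph_edgeSet he
  obtain ⟨k, l, hkl, rfl⟩ := exists_eq_of_mem_pathGraph_edgeSet hf
  rw [pathEdgeColoring_mk hij] at hce
  rw [pathEdgeColoring_mk hkl] at hcf
  have hv : (v.val = i.val ∨ v.val = j.val) ∧ (v.val = k.val ∨ v.val = l.val) := by
    rw [Sym2.mem_iff] at hve hvf
    omega
  have hik : i.val ≠ k.val := fun h =>
    hef (Sym2.eq_iff.2 (.inl ⟨Fin.ext h, Fin.ext (by omega)⟩))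
  rcases (by omega : k.val = i.val + 1 ∨ i.val = k.val + 1) with h | h
  · exact Nat.mod_ne_add_mod i.val one_pos hm (by rw [← h, hce, hcf])
  · exact Nat.mod_ne_add_mod k.val one_pos hm (by rw [← h, hce, hcf])

/-- The endvertex `i + 1` of an edge `s(i, i + 1)` of colour `i % m` has no matched neighbour
other than `i`: the vertex `i + 2` lies only on edges of colours `(i + 1) % m` and `(i + 2) % m`. -/
lemma pathGraph_isSemistrongMatching_pathEdgeColoring (n : ℕ) {m : ℕ} (hm : 3 ≤ m) (r : ℕ) :
    IsSemistrongMatching (pathGraph n)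
      {e | e ∈ (pathGraph n).edgeSet ∧ pathEdgeColoring n m e = r} := by
  refine ⟨pathGraph_isMatchingSet_pathEdgeColoring n (by omega) r, ?_⟩
  rintro e ⟨he, hce⟩
  obtain ⟨i, j, hij, rfl⟩ := exists_eq_of_mem_pathGraph_edgeSet he
  rw [pathEdgeColoring_mk hij] at hce
  refine ⟨j, i, Sym2.eq_swap, fun w ⟨f, ⟨hf, hcf⟩, hwf⟩ hjw => Fin.ext ?_⟩
  obtain ⟨k, l, hkl, rfl⟩ := exists_eq_of_mem_pathGraph_edgeSet hf
  rw [pathEdgeColoring_mk hkl] at hcf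
  have hw : w.val = k.val ∨ w.val = l.val := by
    rw [Sym2.mem_iff] at hwf
    omega
  rcases pathGraph_adj.1 hjw with h | h
  · rcases (by omega : k.val = i.val + 1 ∨ k.val = i.val + 2) with hk | hk
    · exact absurd (by rw [← hk, hce, hcf]) (Nat.mod_ne_add_mod i.val one_pos (by omega))
    · exact absurd (by rw [← hk, hce, hcf]) (Nat.mod_ne_add_mod i.val two_pos hm)
  · omega

lemma pathGraph_hasOneDegenerateEdgeColoring_two (n : ℕ) :
    HasOneDegenerateEdgeColoring (pathGraph n) 2 :=
  ⟨pathEdgeColoring n 2, fun e _ => by induction e using Sym2.ind; exact Nat.mod_lt _ two_pos,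
    fun r => ⟨pathGraph_isMatchingSet_pathEdgeColoring n le_rfl r,
      (pathGraph_isAcyclic n).induce _⟩⟩

lemma pathGraph_hasSemistrongEdgeColoring_three (n : ℕ) :
    HasSemistrongEdgeColoring (pathGraph n) 3 :=
  ⟨pathEdgeColoring n 3, fun e _ => by induction e using Sym2.ind; exact Nat.mod_lt _ three_pos,
    pathGraph_isSemistrongMatching_pathEdgeColoring n le_rfl⟩

end SimpleGraph

/-- For the path `P₆` on `6` vertices, the 1-degenerate chromatic index equals
`2` while the semistrong chromatic index equals `3`; in particular
`χ'_1(P₆) < χ''_ss(P₆)`. -/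
theorem pathGraph_six_chromIdx :
    oneDegChromIdx (SimpleGraph.pathGraph 6) = 2 ∧
    ssChromIdx (SimpleGraph.pathGraph 6) = 3 ∧
    oneDegChromIdx (SimpleGraph.pathGraph 6) < ssChromIdx (SimpleGraph.pathGraph 6) := by
  have hadj : ∀ i : Fin 5, (pathGraph 6).Adj i.castSucc i.succ := fun i =>
    pathGraph_adj.2 (.inl rfl)
  have hOne : oneDegChromIdx (pathGraph 6) = 2 :=
    (Nat.sInf_upward_closed_eq_succ_iff (fun _ _ => HasOneDegenerateEdgeColoring.mono) 1).2
      ⟨pathGraph_hasOneDegenerateEdgeColoring_two 6,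
        not_hasOneDegenerateEdgeColoring_one (hadj 0) (hadj 1) (by decide)⟩
  have hSs : ssChromIdx (pathGraph 6) = 3 :=
    (Nat.sInf_upward_closed_eq_succ_iff (fun _ _ => HasSemistrongEdgeColoring.mono) 2).2
      ⟨pathGraph_hasSemistrongEdgeColoring_three 6,
        not_hasSemistrongEdgeColoring_two (hadj 0) (hadj 1) (hadj 2) (hadj 3) (hadj 4)
          (by decide) (by decide) (by decide) (by decide)⟩
  exact ⟨hOne, hSs, by omega⟩
end
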